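/- The union of a Dirichlet set and a finite set of reals is a pseudo-Dirichlet set. -/

import Mathlib

open MeasureTheory Filter Set

/-- Distance from a real number to the nearest integer. -/
noncomputable def nintDist (x : ℝ) : ℝ := |x - round x|

/-- `E` is a Dirichlet set. -/
def IsDirichlet (E : Set ℝ) : Prop :=
  ∃ n : ℕ → ℕ, StrictMono n ∧ ∀ x ∈ E, ∀ k : ℕ, nintDist (n k * x) ≤ (1/2) ^ k

/-- `E` is a pseudo-Dirichlet set. -/
def IsPseudoDirichlet (E : Set ℝ) : Prop :=
  ∃ n : ℕ → ℕ, StrictMono n ∧ ∀ x ∈ E, ∀ᶠ k in atTop, nintDist (n k * x) ≤ (1/2) ^ k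

/-- `E` is an Arbault set. -/
def IsArbault (E : Set ℝ) : Prop :=
  ∃ n : ℕ → ℕ, StrictMono n ∧ ∀ x ∈ E,
    Tendsto (fun k => nintDist (n k * x)) atTop (nhds 0)

/-- `E` is an N-set. -/
def IsNSet (E : Set ℝ) : Prop :=
  ∃ a : ℕ → ℝ, (∀ n, 0 ≤ a n) ∧ ¬ Summable a ∧
    ∀ x ∈ E, Summable (fun n => a n * nintDist (n * x))

/-- `s` is an Fσ set: a countable union of closed sets. -/
def IsFsigma (s : Set ℝ) : Prop :=
  ∃ f : ℕ → Set ℝ, (∀ n, IsClosed (f n)) ∧ s = ⋃ n, f n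

/-!
The distance `nintDist x` is the norm of `x` in the circle `ℝ/ℤ`. By compactness of the torus
`ℝ → ℝ/ℤ`, the points `(n_j x)_{x ∈ S}` have a cluster point, so for every `k` there are
arbitrarily late indices `i < j` with `‖(n_j - n_i) x‖ ≤ 2⁻ᵏ` for all `x ∈ S`; taking `i, j > k`
also gives `‖(n_j - n_i) x‖ ≤ 2⁻ʲ + 2⁻ⁱ ≤ 2⁻ᵏ` on the Dirichlet set `E`. Extracting one such
difference for each `k` shows that `E ∪ S` is even a Dirichlet set.
-/

lemma nintDist_eq_norm_coe (x : ℝ) : nintDist x = ‖(x : UnitAddCircle)‖ :=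
  UnitAddCircle.norm_eq.symm

lemma nintDist_natCast_sub_mul {a b : ℕ} (hba : b ≤ a) (x : ℝ) :
    nintDist ((a - b : ℕ) * x) = ‖((a * x : ℝ) : UnitAddCircle) - ((b * x : ℝ) : UnitAddCircle)‖ := by
  rw [nintDist_eq_norm_coe, Nat.cast_sub hba, sub_mul, AddCircle.coe_sub]

lemma frequently_frequently_forall_dist_lt {ι X : Type*} [PseudoMetricSpace X] [CompactSpace X]
    {S : Set ι} (hS : S.Finite) (u : ℕ → ι → X) {ε : ℝ} (hε : 0 < ε) :
    ∃ᶠ i in atTop, ∃ᶠ j in atTop, ∀ x ∈ S, dist (u j x) (u i x) < ε := by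
  obtain ⟨a, ha⟩ := exists_clusterPt_of_compactSpace (map u atTop)
  have hnear : ∃ᶠ i in atTop, u i ∈ S.pi fun x => Metric.ball (a x) (ε / 2) :=
    ha.frequently (set_pi_mem_nhds hS fun x _ => Metric.ball_mem_nhds (a x) (half_pos hε))
  refine hnear.mono fun i hi => hnear.mono fun j hj x hx => ?_
  calc dist (u j x) (u i x) ≤ dist (u j x) (a x) + dist (u i x) (a x) := dist_triangle_right _ _ _
    _ < ε / 2 + ε / 2 := add_lt_add (hj x hx) (hi x hx)
    _ = ε := add_halves ε

lemma frequently_forall_nintDist_le {E S : Set ℝ} {n : ℕ → ℕ} (hn : StrictMono n)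
    (hE : ∀ x ∈ E, ∀ k : ℕ, nintDist (n k * x) ≤ (1/2) ^ k) (hS : S.Finite) (k : ℕ) :
    ∃ᶠ N : ℕ in atTop, ∀ x ∈ E ∪ S, nintDist (N * x) ≤ (1/2) ^ k := by
  have hclose := frequently_frequently_forall_dist_lt hS
    (fun j x => ((n j * x : ℝ) : UnitAddCircle)) (by positivity : (0 : ℝ) < (1/2) ^ k)
  refine frequently_atTop.mpr fun B => ?_
  obtain ⟨i, hi, hik⟩ := (hclose.and_eventually (eventually_gt_atTop k)).exists
  obtain ⟨j, hij, hj⟩ := (hi.and_eventually (eventually_gt_atTop (n i + B))).exists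
  have hi_le : i ≤ n i := hn.id_le i
  have hj_le : j ≤ n j := hn.id_le j
  refine ⟨n j - n i, by omega, fun x hx => ?_⟩
  rw [nintDist_natCast_sub_mul (by omega)]
  rcases hx with hxE | hxS
  · have hpow : ∀ l, k < l → ((1 : ℝ) / 2) ^ l ≤ (1/2) ^ (k + 1) := fun l hl =>
      pow_le_pow_of_le_one (by norm_num) (by norm_num) hl
    calc _ ≤ nintDist (n j * x) + nintDist (n i * x) := by
            simpa only [nintDist_eq_norm_coe] using norm_sub_le _ _
      _ ≤ (1/2) ^ j + (1/2) ^ i := add_le_add (hE x hxE j) (hE x hxE i)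
      _ ≤ (1/2) ^ (k + 1) + (1/2) ^ (k + 1) :=
            add_le_add (hpow j (by omega)) (hpow i hik)
      _ = (1/2) ^ k := by ring
  · rw [← dist_eq_norm]
    exact (hij x hxS).le

theorem IsDirichlet.union_of_finite {E S : Set ℝ} (hE : IsDirichlet E) (hS : S.Finite) :
    IsDirichlet (E ∪ S) := by
  obtain ⟨n, hn, hnE⟩ := hE
  obtain ⟨m, hm, hmES⟩ := extraction_forall_of_frequently (frequently_forall_nintDist_le hn hnE hS)
  exact ⟨m, hm, fun x hx k => hmES k x hx⟩

theorem IsDirichlet.isPseudoDirichlet {E : Set ℝ} (hE : IsDirichlet E) : IsPseudoDirichlet E :=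
  let ⟨n, hn, hnE⟩ := hE
  ⟨n, hn, fun x hx => Eventually.of_forall (hnE x hx)⟩

theorem stmt16 (E S : Set ℝ) (hE : IsDirichlet E) (hS : S.Finite) :
    IsPseudoDirichlet (E ∪ S) :=
  (hE.union_of_finite hS).isPseudoDirichlet
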